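/- arXiv:math/0502010 — 2 statements merged into one kernel-verified Lean document; each statement's English description precedes it below -/
import Mathlib

section
/- Let H be a complex inner product space, a ∈ H a unit vector, and M ≥ m > 0, L ≥ ℓ > 0 real numbers. Suppose the nonzero vectors x₁,…,xₙ ∈ H satisfy ‖x_k − ((m+M)/2) a‖ ≤ (M−m)/2 and ‖x_k − ((L+ℓ)/2) i a‖ ≤ (L−ℓ)/2 for all k ∈ {1,…,n}. Define α_{m,M} = min_{1≤k≤n} (‖x_k‖² + mM)/((m+M)‖x_k‖) and α_{ℓ,L} = min_{1≤k≤n} (‖x_k‖² + ℓL)/((ℓ+L)‖x_k‖). Then (α_{m,M}² + α_{ℓ,L}²)^{1/2} · Σ_{k=1}^n ‖x_k‖ ≤ ‖Σ_{k=1}^n x_k‖. -/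
/-! Expanding the square, `‖x - ((m + M) / 2) • b‖ ≤ (M - m) / 2` for a unit vector `b` is equivalent
to `‖x‖² + m M ≤ (m + M) Re ⟪b, x⟫`, so `α_{m,M} ‖x_k‖ ≤ Re ⟪a, x_k⟫` for every `k`; the second
disc condition gives `α_{ℓ,L} ‖x_k‖ ≤ Re ⟪i a, x_k⟫ = Im ⟪a, x_k⟫` in the same way. Summing over `k`
bounds the real and imaginary parts of `⟪a, ∑ x_k⟫` from below, hence its modulus, and
`|⟪a, ∑ x_k⟫| ≤ ‖∑ x_k‖`. -/

open scoped InnerProductSpace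

section RCLike

open RCLike

variable {𝕜 E : Type*} [RCLike 𝕜] [NormedAddCommGroup E] [InnerProductSpace 𝕜 E]
  [Module ℝ E] [IsScalarTower ℝ 𝕜 E]

theorem norm_sub_real_smul_sq_of_norm_eq_one {b : E} (hb : ‖b‖ = 1) (c : ℝ) (x : E) :
    ‖x - c • b‖ ^ 2 = ‖x‖ ^ 2 - 2 * c * re ⟪b, x⟫_𝕜 + c ^ 2 := by
  rw [real_smul_eq_coe_smul (K := 𝕜), @norm_sub_sq 𝕜, inner_smul_right, ← inner_conj_symm,
    norm_smul, hb, norm_ofReal]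
  simp only [re_ofReal_mul, conj_re, mul_one, sq_abs]
  ring

theorem sq_norm_add_mul_le_mul_re_inner {b : E} (hb : ‖b‖ = 1) {m M : ℝ} {x : E}
    (hx : ‖x - ((m + M) / 2 : ℝ) • b‖ ≤ (M - m) / 2) :
    ‖x‖ ^ 2 + m * M ≤ (m + M) * re ⟪b, x⟫_𝕜 := by
  have hsq := pow_le_pow_left₀ (norm_nonneg _) hx 2
  rw [norm_sub_real_smul_sq_of_norm_eq_one (𝕜 := 𝕜) hb] at hsq
  linarith

theorem div_mul_norm_le_re_inner {b : E} (hb : ‖b‖ = 1) {m M : ℝ} (hmM : 0 < m + M) {x : E}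
    (hx : ‖x - ((m + M) / 2 : ℝ) • b‖ ≤ (M - m) / 2) :
    (‖x‖ ^ 2 + m * M) / ((m + M) * ‖x‖) * ‖x‖ ≤ re ⟪b, x⟫_𝕜 := by
  rcases eq_or_ne x 0 with rfl | hx0
  · simp
  have hxpos := norm_pos_iff.mpr hx0
  rw [div_mul_eq_mul_div, mul_div_mul_right _ _ hxpos.ne', div_le_iff₀' hmM]
  exact sq_norm_add_mul_le_mul_re_inner hb hx

theorem iInf_mul_sum_norm_le_re_inner_sum {ι : Type*} [Fintype ι] {b : E} (hb : ‖b‖ = 1)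
    {m M : ℝ} (hmM : 0 < m + M) {x : ι → E}
    (hx : ∀ k, ‖x k - ((m + M) / 2 : ℝ) • b‖ ≤ (M - m) / 2) :
    (⨅ k, (‖x k‖ ^ 2 + m * M) / ((m + M) * ‖x k‖)) * ∑ k, ‖x k‖ ≤ re ⟪b, ∑ k, x k⟫_𝕜 := by
  rw [inner_sum, map_sum, Finset.mul_sum]
  gcongr with k
  calc _ ≤ (‖x k‖ ^ 2 + m * M) / ((m + M) * ‖x k‖) * ‖x k‖ := by
        gcongr
        exact ciInf_le (Finite.bddBelow_range _) k
    _ ≤ re ⟪b, x k⟫_𝕜 := div_mul_norm_le_re_inner hb hmM (hx k)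

end RCLike

theorem Complex.sqrt_sq_add_sq_le_norm {z : ℂ} {p q : ℝ} (hp : 0 ≤ p) (hq : 0 ≤ q)
    (hpz : p ≤ z.re) (hqz : q ≤ z.im) : Real.sqrt (p ^ 2 + q ^ 2) ≤ ‖z‖ := by
  rw [Complex.norm_def, Complex.normSq_apply]
  gcongr <;> nlinarith

theorem re_inner_I_smul_left {H : Type*} [NormedAddCommGroup H] [InnerProductSpace ℂ H]
    (a y : H) : (⟪Complex.I • a, y⟫_ℂ).re = (⟪a, y⟫_ℂ).im := by
  simp

theorem stmt_14_general {H : Type*} [NormedAddCommGroup H] [InnerProductSpace ℂ H]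
    (a : H) (ha : ‖a‖ = 1) (m M ℓ L : ℝ) (hm : 0 < m) (hM : m ≤ M) (hℓ : 0 < ℓ) (hL : ℓ ≤ L)
    (n : ℕ) (x : Fin n → H)
    (h₁ : ∀ k, ‖x k - ((m + M) / 2 : ℝ) • a‖ ≤ (M - m) / 2)
    (h₂ : ∀ k, ‖x k - ((L + ℓ) / 2 : ℝ) • (Complex.I • a)‖ ≤ (L - ℓ) / 2)
    (αmM αℓL : ℝ)
    (hαmM : αmM = ⨅ k, (‖x k‖ ^ 2 + m * M) / ((m + M) * ‖x k‖))
    (hαℓL : αℓL = ⨅ k, (‖x k‖ ^ 2 + ℓ * L) / ((ℓ + L) * ‖x k‖)) :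
    Real.sqrt (αmM ^ 2 + αℓL ^ 2) * ∑ k, ‖x k‖ ≤ ‖∑ k, x k‖ := by
  set T := ∑ k, ‖x k‖
  have hT : 0 ≤ T := Finset.sum_nonneg fun k _ ↦ norm_nonneg (x k)
  have hM0 : 0 < M := hm.trans_le hM
  have hL0 : 0 < L := hℓ.trans_le hL
  have hα₁ : 0 ≤ αmM := hαmM ▸ Real.iInf_nonneg fun _ ↦ by positivity
  have hα₂ : 0 ≤ αℓL := hαℓL ▸ Real.iInf_nonneg fun _ ↦ by positivity
  have hre : αmM * T ≤ (⟪a, ∑ k, x k⟫_ℂ).re := by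
    rw [hαmM]; exact iInf_mul_sum_norm_le_re_inner_sum (𝕜 := ℂ) ha (by linarith) h₁
  have him : αℓL * T ≤ (⟪a, ∑ k, x k⟫_ℂ).im := by
    have hIa : ‖Complex.I • a‖ = 1 := by simp [norm_smul, ha]
    rw [← re_inner_I_smul_left, hαℓL]
    refine iInf_mul_sum_norm_le_re_inner_sum (𝕜 := ℂ) hIa (by linarith) fun k ↦ ?_
    rw [add_comm ℓ]
    exact h₂ k
  calc Real.sqrt (αmM ^ 2 + αℓL ^ 2) * T = Real.sqrt ((αmM * T) ^ 2 + (αℓL * T) ^ 2) := by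
        rw [mul_pow, mul_pow, ← add_mul, Real.sqrt_mul' _ (by positivity), Real.sqrt_sq hT]
    _ ≤ ‖⟪a, ∑ k, x k⟫_ℂ‖ :=
        Complex.sqrt_sq_add_sq_le_norm (by positivity) (by positivity) hre him
    _ ≤ ‖∑ k, x k‖ := by simpa only [ha, one_mul] using norm_inner_le_norm (𝕜 := ℂ) a (∑ k, x k)

theorem stmt_14 {H : Type*} [NormedAddCommGroup H] [InnerProductSpace ℂ H]
    (a : H) (ha : ‖a‖ = 1) (m M ℓ L : ℝ) (hm : 0 < m) (hM : m ≤ M) (hℓ : 0 < ℓ) (hL : ℓ ≤ L)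
    (n : ℕ) (hn : 0 < n) (x : Fin n → H) (hx : ∀ k, x k ≠ 0)
    (h₁ : ∀ k, ‖x k - ((m + M) / 2 : ℝ) • a‖ ≤ (M - m) / 2)
    (h₂ : ∀ k, ‖x k - ((L + ℓ) / 2 : ℝ) • (Complex.I • a)‖ ≤ (L - ℓ) / 2)
    (αmM αℓL : ℝ)
    (hαmM : αmM = ⨅ k, (‖x k‖ ^ 2 + m * M) / ((m + M) * ‖x k‖))
    (hαℓL : αℓL = ⨅ k, (‖x k‖ ^ 2 + ℓ * L) / ((ℓ + L) * ‖x k‖)) :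
    Real.sqrt (αmM ^ 2 + αℓL ^ 2) * ∑ k, ‖x k‖ ≤ ‖∑ k, x k‖ :=
  stmt_14_general a ha m M ℓ L hm hM hℓ hL n x h₁ h₂ αmM αℓL hαmM hαℓL
end

section
/- (Diaz–Metcalf) Let H be a real or complex inner product space and a ∈ H a unit vector. Suppose r ≥ 0 and the nonzero vectors x₁,…,xₙ ∈ H satisfy r ≤ Re⟨x_k, a⟩ / ‖x_k‖ for all k ∈ {1,…,n}. Then r · Σ_{k=1}^n ‖x_k‖ ≤ ‖Σ_{k=1}^n x_k‖, with equality if and only if Σ_{k=1}^n x_k = r (Σ_{k=1}^n ‖x_k‖) a. -/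
/-!
Summing `r ‖x_k‖ ≤ Re⟨x_k, a⟩` gives `r ∑ ‖x_k‖ ≤ Re⟨∑ x_k, a⟩ ≤ ‖∑ x_k‖` by Cauchy–Schwarz.
Equality forces `Re⟨∑ x_k, a⟩ = ‖∑ x_k‖`, the equality case of Cauchy–Schwarz, which pins
`∑ x_k` down to the nonnegative multiple `‖∑ x_k‖ • a` of `a`.
-/

open RCLike
open scoped InnerProductSpace

section DiazMetcalf

variable {𝕜 H : Type*} [RCLike 𝕜] [NormedAddCommGroup H] [InnerProductSpace 𝕜 H]

theorem re_inner_le_norm_of_norm_eq_one {a : H} (ha : ‖a‖ = 1) (v : H) :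
    re ⟪v, a⟫_𝕜 ≤ ‖v‖ := by
  simpa [ha] using re_inner_le_norm (𝕜 := 𝕜) v a

theorem eq_norm_smul_of_re_inner_eq_norm {a v : H} (ha : ‖a‖ = 1) (hv : re ⟪v, a⟫_𝕜 = ‖v‖) :
    v = (‖v‖ : 𝕜) • a := by
  refine eq_of_norm_le_re_inner_eq_norm_sq (𝕜 := 𝕜) ?_ ?_
  · simp [norm_smul, ha]
  · rw [inner_smul_right, re_ofReal_mul, hv, norm_smul, ha]
    simp [sq]

theorem eq_norm_iff_eq_smul_of_le_re_inner {a v : H} {c : ℝ} (ha : ‖a‖ = 1) (hc : 0 ≤ c)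
    (hcv : c ≤ re ⟪v, a⟫_𝕜) : c = ‖v‖ ↔ v = (c : 𝕜) • a := by
  constructor
  · rintro rfl
    exact eq_norm_smul_of_re_inner_eq_norm ha
      (le_antisymm (re_inner_le_norm_of_norm_eq_one ha v) hcv)
  · rintro rfl
    rw [norm_smul, ha, mul_one, norm_ofReal, abs_of_nonneg hc]

theorem mul_norm_le_re_inner_of_le_div {a x : H} {r : ℝ} (h : r ≤ re ⟪x, a⟫_𝕜 / ‖x‖) :
    r * ‖x‖ ≤ re ⟪x, a⟫_𝕜 := by
  rcases eq_or_ne x 0 with rfl | hx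
  · simp
  · exact (le_div_iff₀ (norm_pos_iff.2 hx)).1 h

theorem mul_sum_norm_le_re_inner_sum {ι : Type*} (s : Finset ι) {a : H} {r : ℝ} {x : ι → H}
    (h : ∀ k ∈ s, r ≤ re ⟪x k, a⟫_𝕜 / ‖x k‖) :
    r * ∑ k ∈ s, ‖x k‖ ≤ re ⟪∑ k ∈ s, x k, a⟫_𝕜 := by
  rw [Finset.mul_sum, sum_inner, map_sum]
  exact Finset.sum_le_sum fun k hk => mul_norm_le_re_inner_of_le_div (h k hk)

end DiazMetcalf

theorem stmt_19_general {𝕜 H : Type*} [RCLike 𝕜] [NormedAddCommGroup H] [InnerProductSpace 𝕜 H]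
    (a : H) (ha : ‖a‖ = 1) (r : ℝ) (hr : 0 ≤ r)
    (n : ℕ) (x : Fin n → H)
    (h : ∀ k, r ≤ RCLike.re (inner 𝕜 (x k) a : 𝕜) / ‖x k‖) :
    r * ∑ k, ‖x k‖ ≤ ‖∑ k, x k‖ ∧
      (r * ∑ k, ‖x k‖ = ‖∑ k, x k‖ ↔ ∑ k, x k = ((r * ∑ k, ‖x k‖ : ℝ) : 𝕜) • a) := by
  have hre := mul_sum_norm_le_re_inner_sum Finset.univ fun k _ => h k
  have hnonneg : 0 ≤ r * ∑ k, ‖x k‖ := by positivity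
  exact ⟨hre.trans (re_inner_le_norm_of_norm_eq_one ha _),
    eq_norm_iff_eq_smul_of_le_re_inner ha hnonneg hre⟩

theorem stmt_19 {𝕜 H : Type*} [RCLike 𝕜] [NormedAddCommGroup H] [InnerProductSpace 𝕜 H]
    (a : H) (ha : ‖a‖ = 1) (r : ℝ) (hr : 0 ≤ r)
    (n : ℕ) (x : Fin n → H) (hx : ∀ k, x k ≠ 0)
    (h : ∀ k, r ≤ RCLike.re (inner 𝕜 (x k) a : 𝕜) / ‖x k‖) :
    r * ∑ k, ‖x k‖ ≤ ‖∑ k, x k‖ ∧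
      (r * ∑ k, ‖x k‖ = ‖∑ k, x k‖ ↔ ∑ k, x k = ((r * ∑ k, ‖x k‖ : ℝ) : 𝕜) • a) :=
  stmt_19_general a ha r hr n x h
end
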